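/- For n ≥ 2, NRA_{0,n} is a proper extension of NA_{0,n}: every theorem of NA_{0,n} is a theorem of NRA_{0,n}, but NRA_{0,n} proves ¬□^{n+1}⊥ while NA_{0,n} does not. -/
import Mathlib


inductive Formula : Type
  | bot : Formula
  | var : ℕ → Formula
  | neg : Formula → Formula
  | or : Formula → Formula → Formula
  | box : Formula → Formula
  deriving DecidableEq

namespace Formula

def imp (φ ψ : Formula) : Formula := .or (.neg φ) ψ

def and (φ ψ : Formula) : Formula := .neg (.or (.neg φ) (.neg ψ))

/-- □^n φ -/
def boxn : ℕ → Formula → Formula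
  | 0, φ => φ
  | k+1, φ => .box (boxn k φ)

/-- the set of subformulas -/
def sub : Formula → Finset Formula
  | .bot => {.bot}
  | .var p => {.var p}
  | .neg φ => insert (.neg φ) φ.sub
  | .or φ ψ => insert (.or φ ψ) (φ.sub ∪ ψ.sub)
  | .box φ => insert (.box φ) φ.sub

/-- ∼ρ -/
def negg : Formula → Formula
  | .neg φ => φ
  | φ => .neg φ

end Formula

def NSub (ψ : Formula) : Finset Formula := ψ.sub ∪ ψ.sub.image Formula.negg

/-- boolean evaluation treating boxed formulas and variables as atoms -/
def evalP (v : Formula → Bool) : Formula → Bool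
  | .bot => false
  | .var p => v (.var p)
  | .neg φ => !(evalP v φ)
  | .or φ ψ => evalP v φ || evalP v ψ
  | .box φ => v (.box φ)

/-- propositional tautologies in the modal language -/
def Tautology (φ : Formula) : Prop := ∀ v, evalP v φ = true

/-- Provability in NA_{m,n} (ros = false) and NRA_{m,n} (ros = true):
    propositional tautologies, the scheme □^n φ → □^m φ, modus ponens,
    necessitation, and (if ros) the rule Ros^□ : ¬□φ / ¬□□φ. -/
inductive Prov (m n : ℕ) (ros : Bool) : Formula → Prop
  | taut {φ} : Tautology φ → Prov m n ros φ
  | axA (φ) : Prov m n ros ((Formula.boxn n φ).imp (Formula.boxn m φ))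
  | mp {φ ψ} : Prov m n ros (φ.imp ψ) → Prov m n ros φ → Prov m n ros ψ
  | nec {φ} : Prov m n ros φ → Prov m n ros (.box φ)
  | ros {φ} : ros = true → Prov m n ros (.neg (.box φ)) →
      Prov m n ros (.neg (.box (.box φ)))

/-- An N-frame on world set W: a binary relation R_φ for each formula φ. -/
abbrev NFrame (W : Type) := Formula → W → W → Prop

structure NModel (W : Type) where
  Rel : NFrame W
  V : W → ℕ → Prop

/-- satisfaction in an N-model -/
def Sat {W : Type} (M : NModel W) : W → Formula → Prop
  | _, .bot => False
  | w, .var p => M.V w p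
  | w, .neg φ => ¬ Sat M w φ
  | w, .or φ ψ => Sat M w φ ∨ Sat M w ψ
  | w, .box φ => ∀ w', M.Rel φ w w' → Sat M w' φ

/-- x R_φ^k y : there is a φ-path of length k from x to y -/
def FPath {W : Type} (R : NFrame W) (φ : Formula) : ℕ → W → W → Prop
  | 0, x, y => x = y
  | k+1, x, y => ∃ w, R (Formula.boxn k φ) x w ∧ FPath R φ k w y

/-- (m,n)-accessibility for φ -/
def AccFor {W : Type} (R : NFrame W) (m n : ℕ) (φ : Formula) : Prop :=
  ∀ x y, FPath R φ m x y → FPath R φ n x y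

/-- Γ-(m,n)-accessibility -/
def SubAcc {W : Type} (R : NFrame W) (m n : ℕ) (Γ : Finset Formula) : Prop :=
  ∀ φ, Formula.boxn m φ ∈ Γ → AccFor R m n φ

/-- (m,n)-accessibility -/
def Accessible {W : Type} (R : NFrame W) (m n : ℕ) : Prop :=
  ∀ φ, AccFor R m n φ

def ValidM {W : Type} (M : NModel W) (ψ : Formula) : Prop := ∀ w, Sat M w ψ

def ValidF {W : Type} (R : NFrame W) (ψ : Formula) : Prop :=
  ∀ V : W → ℕ → Prop, ValidM ⟨R, V⟩ ψ



/-- recognize ⊥-towers □^j ⊥ -/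
def tower? : Formula → Option ℕ
  | .bot => some 0
  | .box φ => (tower? φ).map (· + 1)
  | _ => none

lemma tower_boxn (j : ℕ) : tower? (Formula.boxn j .bot) = some j := by
  induction j with
  | zero => rfl
  | succ k ih => simp [Formula.boxn, tower?, ih]

lemma tower_some : ∀ (ψ : Formula) (j : ℕ), tower? ψ = some j → ψ = Formula.boxn j .bot := by
  intro ψ
  induction ψ with
  | bot => intro j h; simp [tower?] at h; subst h; rfl
  | var p => intro j h; simp [tower?] at h
  | neg φ ih => intro j h; simp [tower?] at h
  | or φ χ ih1 ih2 => intro j h; simp [tower?] at h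
  | box φ ih =>
      intro j h
      simp [tower?] at h
      obtain ⟨k, hk, rfl⟩ := h
      rw [ih k hk]; rfl

lemma boxn_eq_tower : ∀ (k : ℕ) (φ : Formula) (j : ℕ),
    Formula.boxn k φ = Formula.boxn j .bot → k ≤ j ∧ φ = Formula.boxn (j - k) .bot := by
  intro k
  induction k with
  | zero => intro φ j h; simpa [Formula.boxn] using h
  | succ m ih =>
      intro φ j h
      cases j with
      | zero => simp [Formula.boxn] at h
      | succ j' =>
          simp only [Formula.boxn, Formula.box.injEq] at h
          obtain ⟨h1, h2⟩ := ih φ j' h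
          exact ⟨by omega, by simpa [Nat.succ_sub_succ] using h2⟩

/-- a two-point boolean "valuation": truth value of each formula at worlds false/true -/
def sN (n : ℕ) : Formula → Bool → Bool
  | .bot, _ => false
  | .var _, _ => false
  | .neg φ, w => !(sN n φ w)
  | .or φ ψ, w => sN n φ w || sN n ψ w
  | .box ψ, w =>
      (sN n ψ false && sN n ψ true) ||
        (w && (match tower? ψ with
          | some j => decide ((j + 1) % n = 1)
          | none => false))

lemma sN_box_false (n : ℕ) (ψ : Formula) :
    sN n (.box ψ) false = (sN n ψ false && sN n ψ true) := by
  simp [sN]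

lemma sN_box_true (n : ℕ) (ψ : Formula) :
    sN n (.box ψ) true = ((sN n ψ false && sN n ψ true) ||
      (match tower? ψ with
        | some j => decide ((j + 1) % n = 1)
        | none => false)) := by
  simp [sN]

lemma sN_tower_false (n : ℕ) : ∀ j, sN n (Formula.boxn j .bot) false = false := by
  intro j
  induction j with
  | zero => rfl
  | succ k ih => simp [Formula.boxn, sN_box_false, ih]

lemma sN_tower_true (n : ℕ) (hn : 2 ≤ n) :
    ∀ j, sN n (Formula.boxn j .bot) true = decide (j % n = 1) := by
  intro j
  cases j with
  | zero =>
      have : (0 : ℕ) % n = 0 := Nat.zero_mod n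
      simp [Formula.boxn, sN, this]
  | succ k =>
      simp only [Formula.boxn, sN, sN_tower_false, tower_boxn, Bool.false_and,
        Bool.false_or, Bool.true_and]

lemma sN_strip (n : ℕ) : ∀ (k : ℕ) (φ : Formula),
    sN n (Formula.boxn (k + 1) φ) false = true →
      sN n φ false = true ∧ sN n φ true = true := by
  intro k
  induction k with
  | zero =>
      intro φ h
      rw [Formula.boxn, Formula.boxn, sN_box_false] at h
      exact ⟨(Bool.and_eq_true _ _).mp h |>.1, (Bool.and_eq_true _ _).mp h |>.2⟩
  | succ m ih =>
      intro φ h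
      rw [Formula.boxn, sN_box_false] at h
      exact ih φ ((Bool.and_eq_true _ _).mp h).1

lemma sN_axiom (n : ℕ) (hn : 2 ≤ n) (φ : Formula) (w : Bool) :
    sN n (Formula.boxn n φ) w = true → sN n φ w = true := by
  obtain ⟨m, rfl⟩ : ∃ m, n = m + 2 := ⟨n - 2, by omega⟩
  intro h
  cases w with
  | false =>
      have : m + 2 = (m + 1) + 1 := rfl
      rw [this] at h
      exact (sN_strip _ (m + 1) φ h).1
  | true =>
      rw [show Formula.boxn (m + 2) φ = .box (Formula.boxn (m + 1) φ) from rfl,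
        sN_box_true] at h
      rcases (Bool.or_eq_true _ _).mp h with h1 | h2
      · exact (sN_strip _ m φ ((Bool.and_eq_true _ _).mp h1).1).2
      · -- boxn (m+1) φ is a ⊥-tower □^j⊥ with (j+1) % n = 1
        rcases htow : tower? (Formula.boxn (m + 1) φ) with _ | j
        · rw [htow] at h2; simp at h2
        · rw [htow] at h2
          simp only [decide_eq_true_eq] at h2
          have hψ := tower_some _ _ htow
          obtain ⟨hle, rfl⟩ := boxn_eq_tower (m + 1) φ j hψ
          rw [sN_tower_true _ hn]
          have hj1 : j - (m + 1) + (m + 2) = j + 1 := by omega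
          have : (j - (m + 1)) % (m + 2) = (j + 1) % (m + 2) := by
            rw [← hj1, Nat.add_mod_right]
          rw [this, h2]
          simp

lemma evalP_sN (n : ℕ) (w : Bool) : ∀ φ : Formula,
    evalP (fun ψ => sN n ψ w) φ = sN n φ w := by
  intro φ
  induction φ with
  | bot => rfl
  | var p => rfl
  | neg ψ ih => simp [evalP, sN, ih]
  | or ψ χ ih1 ih2 => simp [evalP, sN, ih1, ih2]
  | box ψ ih => rfl

lemma sN_sound (n : ℕ) (hn : 2 ≤ n) {φ : Formula} (h : Prov 0 n false φ) :
    ∀ w, sN n φ w = true := by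
  induction h with
  | taut ht => intro w; rw [← evalP_sN n w]; exact ht _
  | axA ψ =>
      intro w
      have key := sN_axiom n hn ψ w
      simp only [Formula.imp, sN, Formula.boxn, Bool.or_eq_true, Bool.not_eq_true']
      cases hb : sN n (Formula.boxn n ψ) w with
      | false => left; rfl
      | true => right; exact key hb
  | mp h1 h2 ih1 ih2 =>
      intro w
      have e1 := ih1 w
      have e2 := ih2 w
      simp only [Formula.imp, sN, Bool.or_eq_true, Bool.not_eq_true'] at e1
      rcases e1 with e1 | e1
      · rw [e2] at e1; exact absurd e1 (by simp)
      · exact e1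
  | nec h ih => intro w; simp [sN, ih]
  | ros hros _ _ => exact absurd hros (by simp)

theorem stmt9 (n : ℕ) (hn : 2 ≤ n) :
    (∀ φ : Formula, Prov 0 n false φ → Prov 0 n true φ) ∧
      Prov 0 n true (.neg (Formula.boxn (n + 1) .bot)) ∧
      ¬ Prov 0 n false (.neg (Formula.boxn (n + 1) .bot)) := by
  obtain ⟨m, rfl⟩ : ∃ m, n = m + 2 := ⟨n - 2, by omega⟩
  refine ⟨?_, ?_, ?_⟩
  · -- NA ⊆ NRA
    intro φ h
    induction h with
    | taut ht => exact Prov.taut ht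
    | axA ψ => exact Prov.axA ψ
    | mp _ _ ih1 ih2 => exact Prov.mp ih1 ih2
    | nec _ ih => exact Prov.nec ih
    | ros hros _ _ => exact absurd hros (by simp)
  · -- NRA proves ¬□^{n+1}⊥
    have hA : Prov 0 (m + 2) true
        ((Formula.boxn (m + 2) .bot).imp (Formula.boxn 0 .bot)) :=
      Prov.axA .bot
    have htaut : Tautology (((Formula.boxn (m + 2) .bot).imp
        (Formula.boxn 0 .bot)).imp (.neg (Formula.boxn (m + 2) .bot))) := by
      intro v
      show evalP v (((Formula.boxn (m+2) .bot).imp (Formula.boxn 0 .bot)).imp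
        (.neg (Formula.boxn (m+2) .bot))) = true
      simp only [Formula.imp, Formula.boxn, evalP]
      cases v (.box (Formula.boxn (m + 1) .bot)) <;> simp
    have hneg : Prov 0 (m + 2) true (.neg (Formula.boxn (m + 2) .bot)) :=
      Prov.mp (Prov.taut htaut) hA
    have : Prov 0 (m + 2) true (.neg (.box (.box (Formula.boxn (m + 1) .bot)))) :=
      Prov.ros rfl hneg
    exact this
  · -- NA does not prove ¬□^{n+1}⊥
    intro h
    have hs := sN_sound (m + 2) (by omega) h true
    have hs2 : (!(sN (m + 2) (Formula.boxn (m + 2 + 1) .bot) true)) = true := hs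
    rw [sN_tower_true (m + 2) (by omega)] at hs2
    have hm : (m + 2 + 1) % (m + 2) = 1 := by
      have h1 : (m + 2 + 1) % (m + 2) = (1 + (m + 2)) % (m + 2) := by ring_nf
      rw [h1, Nat.add_mod_right, Nat.mod_eq_of_lt (by omega)]
    rw [hm] at hs2
    simp at hs2
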